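/- arXiv:1602.05693 — 6 statements merged into one kernel-verified Lean document; each statement's English description precedes it below -/
import Mathlib

section
/- Let X be a locally compact topological space, Y a Hausdorff uniform space, and equip C(X,Y) with the topology of uniform convergence τ_uc. A subfamily F ⊆ C(X,Y) is relatively τ_uc-compact (its closure in τ_uc is compact) if and only if (i) F is pointwise relatively compact, (ii) F is equicontinuous, and (iii) F satisfies the extension property. -/
/-!
Compactness of the closure of `F` in `X →ᵤ Y` is equivalent to total boundedness, and a finite
uniform net yields both equicontinuity and the extension property (with a finite `D`: one
witness point for each pair of net functions that are not uniformly close). Conversely, by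
Tychonoff the pointwise closure of `F` is compact; equicontinuity together with the extension
property makes the identity from the pointwise to the uniform structure uniformly continuous on
`F`, hence on its pointwise closure, whose image is then a compact set containing `F`.
-/

open Set Filter Topology
open scoped UniformConvergence Uniformity

section

variable {X Y : Type*} [UniformSpace Y]

def HasExtensionProperty [TopologicalSpace X] (S : Set (X → Y)) : Prop :=
  ∀ V ∈ 𝓤 Y, ∃ D : Set X, IsCompact D ∧ ∃ U ∈ 𝓤 Y, ∀ f ∈ S, ∀ g ∈ S,
    (∀ x ∈ D, (f x, g x) ∈ U) → ∀ x, (f x, g x) ∈ V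

theorem Set.equicontinuous_iff_exists_mem_nhds [TopologicalSpace X] {S : Set (X → Y)} :
    S.Equicontinuous ↔ ∀ x, ∀ V ∈ 𝓤 Y, ∃ U ∈ 𝓝 x, ∀ f ∈ S, ∀ x' ∈ U, (f x, f x') ∈ V := by
  simp only [Set.Equicontinuous, Equicontinuous, EquicontinuousAt, eventually_iff_exists_mem,
    Subtype.forall]
  exact forall_congr' fun x => forall₂_congr fun V _ => exists_congr fun U =>
    and_congr_right' forall₂_comm

theorem TotallyBounded.exists_finite_uniform_net {S : Set (X → Y)}
    (hS : TotallyBounded (UniformFun.ofFun '' S)) {W : SetRel Y Y} (hW : W ∈ 𝓤 Y) :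
    ∃ t ⊆ S, t.Finite ∧ ∀ f ∈ S, ∃ p ∈ t, ∀ x, (f x, p x) ∈ W := by
  obtain ⟨t, htS, htfin, hcover⟩ := totallyBounded_iff_subset.1 hS _
    ((UniformFun.hasBasis_uniformity X Y).mem_of_mem hW)
  refine ⟨UniformFun.ofFun ⁻¹' t, fun f hf => ?_,
    htfin.preimage UniformFun.ofFun.injective.injOn, fun f hf => ?_⟩
  · exact UniformFun.ofFun.injective.mem_set_image.1 (htS hf)
  · obtain ⟨p, hpt, hfp⟩ := mem_iUnion₂.1 (hcover (mem_image_of_mem _ hf))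
    exact ⟨UniformFun.toFun p, by simpa using hpt, hfp⟩

theorem Set.Equicontinuous.of_totallyBounded [TopologicalSpace X] {S : Set (X → Y)}
    (hS : TotallyBounded (UniformFun.ofFun '' S)) (hc : ∀ f ∈ S, Continuous f) :
    S.Equicontinuous := by
  refine Set.equicontinuous_iff_exists_mem_nhds.2 fun x V hV => ?_
  obtain ⟨W, hW, hWs, hWV⟩ := comp_comp_symm_mem_uniformity_sets hV
  obtain ⟨t, htS, htfin, hnet⟩ := hS.exists_finite_uniform_net hW
  refine ⟨⋂ p ∈ t, p ⁻¹' UniformSpace.ball (p x) W, (biInter_mem htfin).2 fun p hp =>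
    (hc p (htS hp)).continuousAt.preimage_mem_nhds (UniformSpace.ball_mem_nhds _ hW),
    fun f hf x' hx' => ?_⟩
  obtain ⟨p, hpt, hfp⟩ := hnet f hf
  exact hWV ⟨p x', ⟨p x, hfp x, mem_iInter₂.1 hx' p hpt⟩, hWs.symm _ _ (hfp x')⟩

theorem HasExtensionProperty.of_totallyBounded [TopologicalSpace X] {S : Set (X → Y)}
    (hS : TotallyBounded (UniformFun.ofFun '' S)) : HasExtensionProperty S := by
  intro V hV
  obtain ⟨W₁, hW₁, -, hW₁V⟩ := comp_comp_symm_mem_uniformity_sets hV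
  obtain ⟨W, hW, hWs, hWW₁⟩ := comp_comp_symm_mem_uniformity_sets hW₁
  have hWsub : W ⊆ W₁ := fun ⟨a, b⟩ hab =>
    hWW₁ ⟨b, ⟨a, refl_mem_uniformity hW, hab⟩, refl_mem_uniformity hW⟩
  obtain ⟨t, -, htfin, hnet⟩ := hS.exists_finite_uniform_net hW
  have hwitness : ∀ p q : X → Y, ∃ E : Set X, E.Finite ∧
      ((∀ x ∈ E, (p x, q x) ∈ W₁) → ∀ x, (p x, q x) ∈ W₁) := by
    intro p q
    by_cases h : ∀ x, (p x, q x) ∈ W₁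
    · exact ⟨∅, finite_empty, fun _ => h⟩
    · obtain ⟨x, hx⟩ := not_forall.1 h
      exact ⟨{x}, finite_singleton x, fun H => absurd (H x rfl) hx⟩
  choose E hEfin hE using hwitness
  -- `D` holds a witness for every pair of net functions that are not `W₁`-close everywhere.
  refine ⟨⋃ p ∈ t, ⋃ q ∈ t, E p q,
    (htfin.biUnion fun p _ => htfin.biUnion fun q _ => hEfin p q).isCompact, W, hW,
    fun f hf g hg hfg x => ?_⟩
  obtain ⟨p, hpt, hfp⟩ := hnet f hf
  obtain ⟨q, hqt, hgq⟩ := hnet g hg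
  have hpq : ∀ x, (p x, q x) ∈ W₁ := hE p q fun y hy => hWW₁
    ⟨g y, ⟨f y, hWs.symm _ _ (hfp y), hfg y (mem_biUnion hpt (mem_biUnion hqt hy))⟩, hgq y⟩
  exact hW₁V ⟨q x, ⟨p x, hWsub (hfp x), hpq x⟩, hWsub (hWs.symm _ _ (hgq x))⟩

theorem Set.Equicontinuous.uniformContinuousOn_ofFun [TopologicalSpace X] {S : Set (X → Y)}
    (heq : S.Equicontinuous) (hext : HasExtensionProperty S) :
    UniformContinuousOn UniformFun.ofFun S := by
  refine ((𝓤 (X → Y)).basis_sets.uniformContinuousOn_iff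
    (UniformFun.hasBasis_uniformity X Y)).2 fun V hV => ?_
  obtain ⟨D, hD, U, hU, hUV⟩ := hext V hV
  obtain ⟨W, hW, hWs, hWU⟩ := comp_comp_symm_mem_uniformity_sets hU
  choose O hO hOW using fun x => Set.equicontinuous_iff_exists_mem_nhds.1 heq x W hW
  obtain ⟨t, -, ht⟩ := hD.elim_nhds_subcover O fun x _ => hO x
  refine ⟨⋂ c ∈ t, (fun p : (X → Y) × (X → Y) => (p.1 c, p.2 c)) ⁻¹' W,
    (biInter_finset_mem t).2 fun c _ => Pi.uniformContinuous_proj _ c hW,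
    fun f hf g hg hfg => hUV f hf g hg fun z hz => ?_⟩
  obtain ⟨c, hct, hzc⟩ := mem_iUnion₂.1 (ht hz)
  exact hWU ⟨g c, ⟨f c, hWs.symm _ _ (hOW c f hf z hzc), mem_iInter₂.1 hfg c hct⟩,
    hOW c g hg z hzc⟩

theorem uniformContinuousOn_ofFun_closure {S : Set (X → Y)}
    (h : UniformContinuousOn UniformFun.ofFun S) :
    UniformContinuousOn UniformFun.ofFun (closure S) := by
  -- Closeness passes to the pointwise closure because closed entourages `V` of `Y` give
  -- entourages of `X →ᵤ Y` that are closed in the product topology.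
  have hb := UniformFun.hasBasis_uniformity_of_basis X Y uniformity_hasBasis_closed
  refine (uniformity_hasBasis_open.uniformContinuousOn_iff hb).2 fun V hV => ?_
  obtain ⟨W, hW, hWV⟩ := (uniformity_hasBasis_open.uniformContinuousOn_iff hb).1 h V hV
  have hclosed : IsClosed {p : (X → Y) × (X → Y) | ∀ x, (p.1 x, p.2 x) ∈ V} := by
    simp only [ofPred_forall]
    exact isClosed_iInter fun x => hV.2.preimage (by fun_prop)
  refine ⟨W, hW, fun f hf g hg hfg => ?_⟩
  have : (f, g) ∈ closure (W ∩ S ×ˢ S) :=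
    hW.2.inter_closure ⟨hfg, by rw [closure_prod_eq]; exact ⟨hf, hg⟩⟩
  exact closure_minimal (fun p hp => hWV p.1 hp.2.1 p.2 hp.2.2 hp.1) hclosed this

theorem isCompact_closure_eval_image [TopologicalSpace X] {S : Set (X → Y)}
    (hS : IsCompact (closure (UniformFun.ofFun '' S))) (x : X) :
    IsCompact (closure (Function.eval x '' S)) :=
  (hS.image (UniformFun.uniformContinuous_eval Y x).continuous).closure_of_subset
    fun _ ⟨f, hf, hfx⟩ => ⟨UniformFun.ofFun f, subset_closure (mem_image_of_mem _ hf), hfx⟩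

theorem isCompact_closure_ofFun_image_iff [TopologicalSpace X] {S : Set (X → Y)}
    (hS : ∀ f ∈ S, Continuous f) :
    IsCompact (closure (UniformFun.ofFun '' S)) ↔
      (∀ x, IsCompact (closure (Function.eval x '' S))) ∧ S.Equicontinuous ∧
        HasExtensionProperty S := by
  constructor
  · intro hK
    have hTB : TotallyBounded (UniformFun.ofFun '' S) := hK.totallyBounded.subset subset_closure
    exact ⟨isCompact_closure_eval_image hK, .of_totallyBounded hTB hS,
      HasExtensionProperty.of_totallyBounded hTB⟩
  · rintro ⟨hpc, heq, hext⟩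
    have hcont : ContinuousOn UniformFun.ofFun (closure S) :=
      (uniformContinuousOn_ofFun_closure (heq.uniformContinuousOn_ofFun hext)).continuousOn
    exact ((Pi.isCompact_closure_iff.2 hpc).image_of_continuousOn hcont).closure_of_subset
      (image_mono subset_closure)

end

theorem arzelaAscoli_uniformConvergence_general
    {X Y : Type*} [TopologicalSpace X]
    [UniformSpace Y]
    (F : Set (X →ᵤ Y)) (hF : ∀ f ∈ F, Continuous (UniformFun.toFun f)) :
    IsCompact (closure F) ↔
      ((∀ x : X,
          IsCompact (closure ((fun f : X →ᵤ Y => UniformFun.toFun f x) '' F))) ∧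
        (∀ x : X, ∀ V ∈ uniformity Y, ∃ U ∈ nhds x, ∀ f ∈ F, ∀ x' ∈ U,
          (UniformFun.toFun f x, UniformFun.toFun f x') ∈ V)) ∧
      (∀ V ∈ uniformity Y, ∃ D : Set X, IsCompact D ∧ ∃ U ∈ uniformity Y,
        ∀ f ∈ F, ∀ g ∈ F,
          (∀ x ∈ D, (UniformFun.toFun f x, UniformFun.toFun g x) ∈ U) →
          ∀ x : X, (UniformFun.toFun f x, UniformFun.toFun g x) ∈ V) := by
  obtain ⟨S, rfl⟩ : ∃ S : Set (X → Y), UniformFun.ofFun '' S = F :=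
    ⟨_, UniformFun.ofFun.image_symm_image F⟩
  simp only [forall_mem_image, UniformFun.toFun_ofFun] at hF ⊢
  rw [isCompact_closure_ofFun_image_iff hF, Set.equicontinuous_iff_exists_mem_nhds, and_assoc]
  simp only [image_image, UniformFun.toFun_ofFun, HasExtensionProperty]

/-- **Arzelà–Ascoli for the topology of uniform convergence.**
Let `X` be a locally compact topological space (every point has a compact
neighborhood), `Y` a Hausdorff uniform space, and consider the set of continuous
maps `X → Y` inside `X →ᵤ Y`, the space of functions with the topology of uniform
convergence.  A family `F` of continuous maps is relatively compact for the topology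
of uniform convergence iff it is pointwise relatively compact, equicontinuous, and
satisfies the extension property. -/
theorem arzelaAscoli_uniformConvergence
    {X Y : Type*} [TopologicalSpace X] [WeaklyLocallyCompactSpace X]
    [UniformSpace Y] [T2Space Y]
    (F : Set (X →ᵤ Y)) (hF : ∀ f ∈ F, Continuous (UniformFun.toFun f)) :
    IsCompact (closure F) ↔
      ((∀ x : X,
          IsCompact (closure ((fun f : X →ᵤ Y => UniformFun.toFun f x) '' F))) ∧
        (∀ x : X, ∀ V ∈ uniformity Y, ∃ U ∈ nhds x, ∀ f ∈ F, ∀ x' ∈ U,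
          (UniformFun.toFun f x, UniformFun.toFun f x') ∈ V)) ∧
      (∀ V ∈ uniformity Y, ∃ D : Set X, IsCompact D ∧ ∃ U ∈ uniformity Y,
        ∀ f ∈ F, ∀ g ∈ F,
          (∀ x ∈ D, (UniformFun.toFun f x, UniformFun.toFun g x) ∈ U) →
          ∀ x : X, (UniformFun.toFun f x, UniformFun.toFun g x) ∈ V) :=
  arzelaAscoli_uniformConvergence_general F hF
end

section
/- Let X be a locally compact topological space, Y a Hausdorff uniform space, and equip C(X,Y) with the topology of uniform convergence τ_uc. If a subfamily F ⊆ C(X,Y) is relatively τ_uc-compact, then F satisfies the extension property. -/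
open Set Filter Topology
open scoped UniformConvergence
open scoped Uniformity

/-!
A relatively compact family is totally bounded, so it is covered by finitely many uniform `W`-balls
around a finite net. For each pair of net elements that are not uniformly close, choose one point
where they are far apart; these finitely many points form `D`. If `f` and `g` are close on `D`,
their net neighbours are close at every point of `D`, hence uniformly close, and therefore so are
`f` and `g`.
-/

theorem Set.Finite.exists_finite_forall_imp_forall {α X : Type*} {S : Set α} (hS : S.Finite)
    (R : α → X → Prop) :
    ∃ D : Set X, D.Finite ∧ ∀ a ∈ S, (∀ x ∈ D, R a x) → ∀ x, R a x := by
  have witness : ∀ a, ∃ t : Set X, t.Finite ∧ ((∀ x ∈ t, R a x) → ∀ x, R a x) := by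
    intro a
    by_cases h : ∀ x, R a x
    · exact ⟨∅, finite_empty, fun _ => h⟩
    · obtain ⟨x, hx⟩ := not_forall.mp h
      exact ⟨{x}, finite_singleton x, fun h' => (hx (h' x rfl)).elim⟩
  choose t ht_fin ht using witness
  exact ⟨⋃ a ∈ S, t a, hS.biUnion fun a _ => ht_fin a,
    fun a ha h => ht a fun x hx => h x (mem_biUnion ha hx)⟩

theorem TotallyBounded.exists_finite_forall_mem_of_forall_mem {X Y : Type*} [UniformSpace Y]
    {F : Set (X →ᵤ Y)} (hF : TotallyBounded F) {V : SetRel Y Y} (hV : V ∈ 𝓤 Y) :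
    ∃ D : Set X, D.Finite ∧ ∃ U ∈ 𝓤 Y, ∀ f ∈ F, ∀ g ∈ F,
      (∀ x ∈ D, (UniformFun.toFun f x, UniformFun.toFun g x) ∈ U) →
      ∀ x, (UniformFun.toFun f x, UniformFun.toFun g x) ∈ V := by
  obtain ⟨W₁, hW₁, _, hW₁V⟩ := comp_comp_symm_mem_uniformity_sets hV
  obtain ⟨W₂, hW₂, _, hW₂W₁⟩ := comp_comp_symm_mem_uniformity_sets hW₁
  have hW₂_sub : W₂ ⊆ W₁ := fun p hp =>
    hW₂W₁ ⟨p.2, ⟨p.2, hp, refl_mem_uniformity hW₂⟩, refl_mem_uniformity hW₂⟩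
  obtain ⟨T, hT_fin, hFT⟩ := hF _ ((UniformFun.hasBasis_uniformity X Y).mem_of_mem hW₂)
  obtain ⟨D, hD_fin, hD⟩ := (hT_fin.prod hT_fin).exists_finite_forall_imp_forall
    fun p x => (UniformFun.toFun p.1 x, UniformFun.toFun p.2 x) ∈ W₁
  refine ⟨D, hD_fin, W₂, hW₂, fun f hf g hg hfg x => ?_⟩
  obtain ⟨i, hi, hfi⟩ := mem_iUnion₂.mp (hFT hf)
  obtain ⟨j, hj, hgj⟩ := mem_iUnion₂.mp (hFT hg)
  have hij : ∀ y ∈ D, (UniformFun.toFun i y, UniformFun.toFun j y) ∈ W₁ := fun y hy =>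
    hW₂W₁ ⟨_, ⟨_, SetRel.symm W₂ (hfi y), hfg y hy⟩, hgj y⟩
  exact hW₁V ⟨_, ⟨_, hW₂_sub (hfi x), hD (i, j) ⟨hi, hj⟩ hij x⟩,
    hW₂_sub (SetRel.symm W₂ (hgj x))⟩

theorem extensionProperty_of_relativelyCompact_uniformConvergence_general
    {X Y : Type*} [TopologicalSpace X]
    [UniformSpace Y]
    (F : Set (X →ᵤ Y))
    (hcomp : IsCompact (closure F)) :
    ∀ V ∈ uniformity Y, ∃ D : Set X, IsCompact D ∧ ∃ U ∈ uniformity Y,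
      ∀ f ∈ F, ∀ g ∈ F,
        (∀ x ∈ D, (UniformFun.toFun f x, UniformFun.toFun g x) ∈ U) →
        ∀ x : X, (UniformFun.toFun f x, UniformFun.toFun g x) ∈ V := by
  intro V hV
  obtain ⟨D, hD_fin, hD⟩ :=
    (hcomp.totallyBounded.subset subset_closure).exists_finite_forall_mem_of_forall_mem hV
  exact ⟨D, hD_fin.isCompact, hD⟩

/-- If a family `F` of continuous maps from a locally compact space `X` to a Hausdorff
uniform space `Y` is relatively compact for the topology of uniform convergence, then
`F` satisfies the extension property. -/
theorem extensionProperty_of_relativelyCompact_uniformConvergence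
    {X Y : Type*} [TopologicalSpace X] [WeaklyLocallyCompactSpace X]
    [UniformSpace Y] [T2Space Y]
    (F : Set (X →ᵤ Y)) (hF : ∀ f ∈ F, Continuous (UniformFun.toFun f))
    (hcomp : IsCompact (closure F)) :
    ∀ V ∈ uniformity Y, ∃ D : Set X, IsCompact D ∧ ∃ U ∈ uniformity Y,
      ∀ f ∈ F, ∀ g ∈ F,
        (∀ x ∈ D, (UniformFun.toFun f x, UniformFun.toFun g x) ∈ U) →
        ∀ x : X, (UniformFun.toFun f x, UniformFun.toFun g x) ∈ V :=
  extensionProperty_of_relativelyCompact_uniformConvergence_general F hcomp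
end

section
/- Let X be a topological space, Y a uniform space, and F ⊆ C(X,Y). If F satisfies the extension property, then the topology of uniform convergence τ_uc and the topology of uniform convergence on compacta τ_ucc induce the same subspace topology on F. -/
open Set Filter Topology
open scoped UniformConvergence Uniformity

/-- If a family `F` of continuous maps from a topological space `X` to a uniform space
`Y` satisfies the extension property, then the topology of uniform convergence and the
topology of uniform convergence on compacta induce the same subspace topology on `F`. -/
theorem extensionProperty_inducedTopologies_eq
    {X Y : Type*} [TopologicalSpace X] [UniformSpace Y]
    (F : Set (X → Y)) (hF : ∀ f ∈ F, Continuous f)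
    (hext : ∀ V ∈ uniformity Y, ∃ D : Set X, IsCompact D ∧ ∃ U ∈ uniformity Y,
      ∀ f ∈ F, ∀ g ∈ F, (∀ x ∈ D, (f x, g x) ∈ U) → ∀ x : X, (f x, g x) ∈ V) :
    TopologicalSpace.induced
        (fun f : F => UniformFun.ofFun (f : X → Y)) inferInstance =
      TopologicalSpace.induced
        (fun f : F => UniformOnFun.ofFun {K : Set X | IsCompact K} (f : X → Y))
        inferInstance := by
  set 𝔖 : Set (Set X) := {K : Set X | IsCompact K} with h𝔖
  set e1 : F → (X →ᵤ Y) := fun f => UniformFun.ofFun (f : X → Y) with he1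
  set e2 : F → (X →ᵤ[𝔖] Y) := fun f => UniformOnFun.ofFun 𝔖 (f : X → Y) with he2
  have key : Filter.comap (Prod.map e1 e1) (𝓤 (X →ᵤ Y))
      = Filter.comap (Prod.map e2 e2) (𝓤 (X →ᵤ[𝔖] Y)) := by
    apply le_antisymm
    · -- uniform convergence is finer
      set g : (X →ᵤ Y) → (X →ᵤ[𝔖] Y) :=
        fun f => UniformOnFun.ofFun 𝔖 (UniformFun.toFun f) with hg
      have hgc : 𝓤 (X →ᵤ Y) ≤ Filter.comap (Prod.map g g) (𝓤 (X →ᵤ[𝔖] Y)) :=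
        (UniformOnFun.uniformContinuous_ofUniformFun (α := X) (β := Y) (𝔖 := 𝔖)).le_comap
      calc Filter.comap (Prod.map e1 e1) (𝓤 (X →ᵤ Y))
          ≤ Filter.comap (Prod.map e1 e1)
              (Filter.comap (Prod.map g g) (𝓤 (X →ᵤ[𝔖] Y))) := comap_mono hgc
        _ = Filter.comap (Prod.map e2 e2) (𝓤 (X →ᵤ[𝔖] Y)) := by
              rw [comap_comap]
              rfl
    · -- the extension property direction
      rw [((UniformFun.hasBasis_uniformity X Y).comap (Prod.map e1 e1)).ge_iff]
      rintro V hV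
      obtain ⟨D, hD, U, hU, hext'⟩ := hext V hV
      refine mem_comap.2 ⟨UniformOnFun.gen 𝔖 D U,
        UniformOnFun.gen_mem_uniformity Y 𝔖 (show D ∈ 𝔖 from hD) hU, ?_⟩
      rintro ⟨f, g⟩ hfg
      intro x
      exact hext' f f.2 g g.2 (fun x hx => hfg x hx) x
  have : UniformSpace.comap e1 inferInstance = UniformSpace.comap e2 inferInstance :=
    UniformSpace.ext key
  calc TopologicalSpace.induced e1 inferInstance
      = (UniformSpace.comap e1 inferInstance).toTopologicalSpace :=
        UniformSpace.toTopologicalSpace_comap.symm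
    _ = (UniformSpace.comap e2 inferInstance).toTopologicalSpace := by rw [this]
    _ = TopologicalSpace.induced e2 inferInstance :=
        UniformSpace.toTopologicalSpace_comap
end

section
/- Let X be a locally compact topological space and (Y,d) a metric space, and equip C(X,Y) with the topology of uniform convergence τ_uc (induced by the supremum uniformity). A subfamily F ⊆ C(X,Y) is relatively τ_uc-compact if and only if (i) for every x ∈ X the set {f(x) : f ∈ F} has compact closure in Y, (ii) F is equicontinuous, and (iii) F satisfies the BC(X,Y)-extension property: for every ε > 0 there exist a compact set D ⊆ X and δ > 0 such that for all f,g ∈ F, if d(f(x),g(x)) < δ for all x ∈ D, then d(f(x),g(x)) < ε for all x ∈ X. -/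
/-!
A set of functions is relatively compact in `X →ᵤ Y` iff it is totally bounded with complete
closure. A Cauchy filter on the closure converges pointwise in the compact sets
`closure {f x | f ∈ F}`, hence uniformly, which gives completeness. For total boundedness,
equicontinuity lets finitely many points of a compact `D` control the distance on `D`, and the
extension property lets `D` control it on all of `X`; so uniform closeness on `F` is implied by
closeness at finitely many points, and Tychonoff makes `F` totally bounded for pointwise
convergence. Conversely, a finite uniform net gives equicontinuity by an `ε/3` argument, and the
extension property with `D` a finite set of points witnessing every pair of net points that are
far apart somewhere.
-/

open Set Filter Topology UniformFun
open scoped UniformConvergence Uniformity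

theorem totallyBounded_of_totallyBounded_image {α β : Type*} [UniformSpace α] [UniformSpace β]
    {s : Set α} {φ : α → β} (hs : TotallyBounded (φ '' s))
    (hφ : ∀ V ∈ 𝓤 α, ∃ W ∈ 𝓤 β, ∀ a ∈ s, ∀ b ∈ s, (φ a, φ b) ∈ W → (a, b) ∈ V) :
    TotallyBounded s := by
  rw [totallyBounded_iff_ultrafilter] at hs ⊢
  intro l hl
  have hφl : Cauchy (map φ l) :=
    hs (l.map φ) (by simpa using image_mem_map (le_principal_iff.1 hl))
  refine ⟨l.neBot, fun V hV => ?_⟩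
  obtain ⟨W, hW, hWV⟩ := hφ V hV
  have hss : s ×ˢ s ∈ (l : Filter α) ×ˢ l :=
    prod_mem_prod (le_principal_iff.1 hl) (le_principal_iff.1 hl)
  have hWl : (fun p : α × α => (φ p.1, φ p.2)) ⁻¹' W ∈ (l : Filter α) ×ˢ l := by
    have := hφl.2 hW
    rwa [prod_map_map_eq, mem_map] at this
  filter_upwards [hss, hWl] with p hp hpW using hWV _ hp.1 _ hp.2 hpW

theorem isCompact_closure_image_of_isCompact_closure {α β : Type*} [TopologicalSpace α]
    [TopologicalSpace β] [T2Space β] {s : Set α} {f : α → β} (hs : IsCompact (closure s))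
    (hf : Continuous f) : IsCompact (closure (f '' s)) :=
  (hs.image hf).of_isClosed_subset isClosed_closure
    (closure_minimal (image_mono subset_closure) (hs.image hf).isClosed)

theorem Set.Finite.exists_finite_witnesses {ι X : Type*} {t : Set ι} (ht : t.Finite)
    (P : ι → X → Prop) : ∃ D : Set X, D.Finite ∧ ∀ i ∈ t, (∃ x, P i x) → ∃ x ∈ D, P i x := by
  choose w hw using fun i : {i // ∃ x, P i x} => i.2
  refine ⟨w '' (Subtype.val ⁻¹' t), (ht.preimage Subtype.val_injective.injOn).image w,
    fun i hi hex => ⟨w ⟨i, hex⟩, mem_image_of_mem w hi, hw ⟨i, hex⟩⟩⟩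

namespace UniformFun

variable {X α : Type*} [UniformSpace α]

theorem le_nhds_of_cauchy_of_tendsto_eval {l : Filter (X →ᵤ α)} (hl : Cauchy l) {g : X → α}
    (hg : ∀ x, Tendsto (fun f => toFun f x) l (𝓝 (g x))) : l ≤ 𝓝 (ofFun g) := by
  have := hl.1
  rw [(UniformFun.hasBasis_nhds_of_basis X α (ofFun g) uniformity_hasBasis_closed).ge_iff]
  rintro U ⟨hU, hUc⟩
  obtain ⟨V, hV, hVU⟩ :=
    (cauchy_iff.mp hl).2 _ ((UniformFun.hasBasis_uniformity X α).mem_of_mem hU)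
  filter_upwards [hV] with f hf x
  refine hUc.mem_of_tendsto ((hg x).prodMk_nhds tendsto_const_nhds) ?_
  filter_upwards [hV] with f' hf' using hVU (mk_mem_prod hf' hf) x

theorem isComplete_closure {S : Set (X →ᵤ α)}
    (hS : ∀ x, IsComplete (closure ((fun f => toFun f x) '' S))) : IsComplete (closure S) := by
  intro l hl hlS
  have := hl.1
  have hlim : ∀ x, ∃ y, Tendsto (fun f => toFun f x) l (𝓝 y) := fun x =>
    have hev := uniformContinuous_eval α x
    have hmap : map (fun f => toFun f x) l ≤ 𝓟 (closure ((fun f => toFun f x) '' S)) :=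
      (map_mono hlS).trans <| map_principal.trans_le <|
        principal_mono.2 (image_closure_subset_closure_image hev.continuous)
    let ⟨y, _, hy⟩ := hS x _ (hl.map hev) hmap
    ⟨y, hy⟩
  choose g hg using hlim
  have hlg := le_nhds_of_cauchy_of_tendsto_eval hl hg
  exact ⟨ofFun g, isClosed_closure.mem_of_tendsto hlg (le_principal_iff.1 hlS), hlg⟩

end UniformFun

theorem TotallyBounded.equicontinuous {X α : Type*} [TopologicalSpace X] [UniformSpace α]
    {S : Set (X →ᵤ α)} (hS : TotallyBounded S) (hc : ∀ f ∈ S, Continuous (toFun f)) :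
    Equicontinuous (fun f : S => toFun (f : X →ᵤ α)) := by
  intro x₀ U hU
  obtain ⟨V, hV, hVsymm, hVU⟩ := comp_comp_symm_mem_uniformity_sets hU
  obtain ⟨t, htS, htfin, hcov⟩ :=
    hS.exists_subset ((UniformFun.hasBasis_uniformity X α).mem_of_mem hV)
  have hnear : ∀ᶠ x in 𝓝 x₀, ∀ g ∈ t, (toFun g x₀, toFun g x) ∈ V :=
    (eventually_all_finite htfin).2 fun g hg =>
      (hc g (htS hg)).continuousAt (mem_nhds_left _ hV)
  filter_upwards [hnear] with x hx ⟨f, hf⟩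
  obtain ⟨g, hg, hfg⟩ := mem_iUnion₂.1 (hcov hf)
  exact hVU (SetRel.prodMk_mem_comp (SetRel.prodMk_mem_comp (hfg x₀) (hx g hg))
    (SetRel.symm V (hfg x)))

section Metric

variable {X Y : Type*} [TopologicalSpace X] [PseudoMetricSpace Y]

theorem equicontinuous_iff_forall_exists_dist {S : Set (X →ᵤ Y)} :
    Equicontinuous (fun f : S => toFun (f : X →ᵤ Y)) ↔
      ∀ x : X, ∀ ε > (0 : ℝ), ∃ U ∈ 𝓝 x, ∀ f ∈ S, ∀ x' ∈ U,
        dist (toFun f x) (toFun f x') < ε := by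
  refine forall_congr' fun x =>
    Metric.equicontinuousAt_iff_right.trans <| forall₂_congr fun ε _ => ?_
  simp only [eventually_iff_exists_mem, Subtype.forall]
  exact exists_congr fun U => and_congr_right fun _ =>
    ⟨fun h f hf y hy => h y hy f hf, fun h y hy f hf => h f hf y hy⟩

theorem Equicontinuous.exists_finset_dist_lt_on_compact {ι : Type*} {F : ι → X → Y}
    (hF : Equicontinuous F) {D : Set X} (hD : IsCompact D) {ε : ℝ} (hε : 0 < ε) :
    ∃ s : Finset X, ∀ i j, (∀ x ∈ s, dist (F i x) (F j x) < ε / 3) →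
      ∀ x ∈ D, dist (F i x) (F j x) < ε := by
  have hU : ∀ x, {x' | ∀ i, dist (F i x) (F i x') < ε / 3} ∈ 𝓝 x := fun x =>
    Metric.equicontinuousAt_iff_right.1 (hF x) _ (by positivity)
  obtain ⟨s, -, hDs⟩ := hD.elim_nhds_subcover _ fun x _ => hU x
  refine ⟨s, fun i j hij x hx => ?_⟩
  obtain ⟨x₀, hx₀, hxx₀⟩ := mem_iUnion₂.1 (hDs hx)
  calc dist (F i x) (F j x)
      ≤ dist (F i x) (F i x₀) + dist (F i x₀) (F j x₀) + dist (F j x₀) (F j x) :=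
        dist_triangle4 _ _ _ _
    _ < ε / 3 + ε / 3 + ε / 3 := by
        gcongr
        · exact dist_comm (F i x) _ ▸ hxx₀ i
        · exact hij x₀ hx₀
        · exact hxx₀ j
    _ = ε := by ring

def BCExtensionProperty (S : Set (X →ᵤ Y)) : Prop :=
  ∀ ε > (0 : ℝ), ∃ D : Set X, IsCompact D ∧ ∃ δ > (0 : ℝ), ∀ f ∈ S, ∀ g ∈ S,
    (∀ x ∈ D, dist (toFun f x) (toFun g x) < δ) → ∀ x : X, dist (toFun f x) (toFun g x) < ε

theorem TotallyBounded.bcExtensionProperty {S : Set (X →ᵤ Y)} (hS : TotallyBounded S) :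
    BCExtensionProperty S := by
  intro ε hε
  set δ := ε / 5 with hδ
  obtain ⟨t, htS, htfin, hcov⟩ := hS.exists_subset
    ((UniformFun.hasBasis_uniformity_of_basis X Y Metric.uniformity_basis_dist).mem_of_mem
      (show 0 < δ by positivity))
  obtain ⟨D, hDfin, hD⟩ := (htfin.prod htfin).exists_finite_witnesses
    fun p x => 3 * δ ≤ dist (toFun p.1 x) (toFun p.2 x)
  refine ⟨D, hDfin.isCompact, δ, by positivity, fun f hf g hg hfg x => ?_⟩
  obtain ⟨a, ha, hfa : ∀ y, dist (toFun f y) (toFun a y) < δ⟩ := mem_iUnion₂.1 (hcov hf)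
  obtain ⟨b, hb, hgb : ∀ y, dist (toFun g y) (toFun b y) < δ⟩ := mem_iUnion₂.1 (hcov hg)
  by_contra! hx
  obtain ⟨c, hcD, hc⟩ := hD (a, b) ⟨ha, hb⟩ ⟨x, show 3 * δ ≤ dist (toFun a x) (toFun b x) by
    have := dist_triangle4 (toFun f x) (toFun a x) (toFun b x) (toFun g x)
    linarith [hfa x, dist_comm (toFun g x) (toFun b x) ▸ hgb x]⟩
  have := dist_triangle4 (toFun a c) (toFun f c) (toFun g c) (toFun b c)
  linarith [hfg c hcD, hgb c, dist_comm (toFun f c) (toFun a c) ▸ hfa c]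

theorem BCExtensionProperty.totallyBounded {S : Set (X →ᵤ Y)} (hext : BCExtensionProperty S)
    (heq : Equicontinuous (fun f : S => toFun (f : X →ᵤ Y)))
    (hpt : ∀ x, IsCompact (closure ((fun f => toFun f x) '' S))) : TotallyBounded S := by
  refine totallyBounded_of_totallyBounded_image (φ := toFun) ?_ fun V hV => ?_
  · refine (isCompact_univ_pi hpt).totallyBounded.subset ?_
    rintro _ ⟨f, hf, rfl⟩ x -
    exact subset_closure ⟨f, hf, rfl⟩
  · obtain ⟨ε, hε, hεV⟩ :=
      (UniformFun.hasBasis_uniformity_of_basis X Y Metric.uniformity_basis_dist).mem_iff.1 hV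
    obtain ⟨D, hD, δ, hδ, hDδ⟩ := hext ε hε
    obtain ⟨s, hs⟩ := heq.exists_finset_dist_lt_on_compact hD hδ
    refine ⟨⋂ x ∈ s, (fun p : (X → Y) × (X → Y) => (p.1 x, p.2 x)) ⁻¹' {q | dist q.1 q.2 < δ / 3},
      (biInter_finset_mem s).2 fun x _ =>
        Pi.uniformContinuous_proj _ x (Metric.dist_mem_uniformity (by positivity)),
      fun f hf g hg hfg => hεV <| hDδ f hf g hg <|
        hs ⟨f, hf⟩ ⟨g, hg⟩ fun x hx => mem_iInter₂.1 hfg x hx⟩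

end Metric

theorem arzelaAscoli_uniformConvergence_metric_general
    {X Y : Type*} [TopologicalSpace X]
    [MetricSpace Y]
    (F : Set (X →ᵤ Y)) (hF : ∀ f ∈ F, Continuous (UniformFun.toFun f)) :
    IsCompact (closure F) ↔
      (∀ x : X,
        IsCompact (closure ((fun f : X →ᵤ Y => UniformFun.toFun f x) '' F))) ∧
      (∀ x : X, ∀ ε > (0 : ℝ), ∃ U ∈ nhds x, ∀ f ∈ F, ∀ x' ∈ U,
        dist (UniformFun.toFun f x) (UniformFun.toFun f x') < ε) ∧
      (∀ ε > (0 : ℝ), ∃ D : Set X, IsCompact D ∧ ∃ δ > (0 : ℝ),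
        ∀ f ∈ F, ∀ g ∈ F,
          (∀ x ∈ D, dist (UniformFun.toFun f x) (UniformFun.toFun g x) < δ) →
          ∀ x : X, dist (UniformFun.toFun f x) (UniformFun.toFun g x) < ε) := by
  rw [← equicontinuous_iff_forall_exists_dist]
  constructor
  · intro hcpt
    have htb : TotallyBounded F := hcpt.totallyBounded.subset subset_closure
    exact ⟨fun x => isCompact_closure_image_of_isCompact_closure hcpt
      (uniformContinuous_eval Y x).continuous, htb.equicontinuous hF, htb.bcExtensionProperty⟩
  · rintro ⟨hpt, heq, hext : BCExtensionProperty F⟩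
    rw [isCompact_iff_totallyBounded_isComplete]
    exact ⟨(hext.totallyBounded heq hpt).closure, isComplete_closure fun x => (hpt x).isComplete⟩

/-- **Arzelà–Ascoli for the topology of uniform convergence, metric version.**
Let `X` be a locally compact topological space (every point has a compact
neighborhood) and `Y` a metric space; `X →ᵤ Y` carries the supremum uniformity and the
topology of uniform convergence.  A family `F` of continuous maps is relatively
compact iff it is pointwise relatively compact, equicontinuous, and satisfies the
`BC(X,Y)`-extension property. -/
theorem arzelaAscoli_uniformConvergence_metric
    {X Y : Type*} [TopologicalSpace X] [WeaklyLocallyCompactSpace X]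
    [MetricSpace Y]
    (F : Set (X →ᵤ Y)) (hF : ∀ f ∈ F, Continuous (UniformFun.toFun f)) :
    IsCompact (closure F) ↔
      (∀ x : X,
        IsCompact (closure ((fun f : X →ᵤ Y => UniformFun.toFun f x) '' F))) ∧
      (∀ x : X, ∀ ε > (0 : ℝ), ∃ U ∈ nhds x, ∀ f ∈ F, ∀ x' ∈ U,
        dist (UniformFun.toFun f x) (UniformFun.toFun f x') < ε) ∧
      (∀ ε > (0 : ℝ), ∃ D : Set X, IsCompact D ∧ ∃ δ > (0 : ℝ),
        ∀ f ∈ F, ∀ g ∈ F,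
          (∀ x ∈ D, dist (UniformFun.toFun f x) (UniformFun.toFun g x) < δ) →
          ∀ x : X, dist (UniformFun.toFun f x) (UniformFun.toFun g x) < ε) :=
  arzelaAscoli_uniformConvergence_metric_general F hF
end

section
/- Let X be a locally compact topological space and (Y,d) a metric space. If F ⊆ C(X,Y) is relatively compact in the topology of uniform convergence, then F satisfies the BC(X,Y)-extension property: for every ε > 0 there exist a compact set D ⊆ X and δ > 0 such that for all f,g ∈ F, if d(f(x),g(x)) < δ for all x ∈ D, then d(f(x),g(x)) < ε for all x ∈ X. -/
open Set Filter Topology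
open scoped UniformConvergence Uniformity

/-- If a family `F` of continuous maps from a locally compact space `X` to a metric
space `Y` is relatively compact for the topology of uniform convergence, then `F`
satisfies the `BC(X,Y)`-extension property. -/
theorem bcExtensionProperty_of_relativelyCompact_uniformConvergence
    {X Y : Type*} [TopologicalSpace X] [WeaklyLocallyCompactSpace X]
    [MetricSpace Y]
    (F : Set (X →ᵤ Y)) (hF : ∀ f ∈ F, Continuous (UniformFun.toFun f))
    (hcomp : IsCompact (closure F)) :
    ∀ ε > (0 : ℝ), ∃ D : Set X, IsCompact D ∧ ∃ δ > (0 : ℝ),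
      ∀ f ∈ F, ∀ g ∈ F,
        (∀ x ∈ D, dist (UniformFun.toFun f x) (UniformFun.toFun g x) < δ) →
        ∀ x : X, dist (UniformFun.toFun f x) (UniformFun.toFun g x) < ε := by
  classical
  intro ε hε
  have hεd : (0:ℝ) < ε/5 := by linarith
  have hV : UniformFun.gen X Y {p : Y × Y | dist p.1 p.2 < ε/5} ∈ 𝓤 (X →ᵤ Y) :=
    (UniformFun.hasBasis_uniformity X Y).mem_of_mem (Metric.dist_mem_uniformity hεd)
  obtain ⟨t, htF, htfin, hcover⟩ :=
    totallyBounded_iff_subset.mp (hcomp.totallyBounded.subset subset_closure) _ hV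
  let S : (X →ᵤ Y) → (X →ᵤ Y) → Set X := fun i j =>
    if h : ∃ x, 3*ε/5 ≤ dist (UniformFun.toFun i x) (UniformFun.toFun j x)
    then {h.choose} else ∅
  have hSfin : ∀ i j, (S i j).Finite := by
    intro i j; simp only [S]; split <;> simp
  refine ⟨⋃ i ∈ t, ⋃ j ∈ t, S i j,
    (htfin.biUnion fun i _ => htfin.biUnion fun j _ => hSfin i j).isCompact,
    ε/5, hεd, ?_⟩
  intro f hf g hg hfg x
  obtain ⟨i, hit, hfi⟩ : ∃ i ∈ t, (f, i) ∈ UniformFun.gen X Y {p : Y × Y | dist p.1 p.2 < ε/5} := by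
    simpa using hcover hf
  obtain ⟨j, hjt, hgj⟩ : ∃ j ∈ t, (g, j) ∈ UniformFun.gen X Y {p : Y × Y | dist p.1 p.2 < ε/5} := by
    simpa using hcover hg
  have hij : ¬ ∃ x, 3*ε/5 ≤ dist (UniformFun.toFun i x) (UniformFun.toFun j x) := by
    intro h
    have hx0 : h.choose ∈ ⋃ i ∈ t, ⋃ j ∈ t, S i j := by
      refine mem_biUnion hit (mem_biUnion hjt ?_)
      simp only [S, dif_pos h]; exact rfl
    have h1 := hfi h.choose
    have h2 := hgj h.choose
    have h3 := hfg _ hx0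
    have h4 := h.choose_spec
    simp only [mem_setOf_eq] at h1 h2
    have := dist_triangle4 (UniformFun.toFun i h.choose) (UniformFun.toFun f h.choose)
      (UniformFun.toFun g h.choose) (UniformFun.toFun j h.choose)
    rw [dist_comm] at h1
    linarith
  push_neg at hij
  have h1 := hfi x
  have h2 := hgj x
  have h3 := hij x
  simp only [mem_setOf_eq] at h1 h2
  have := dist_triangle4 (UniformFun.toFun f x) (UniformFun.toFun i x)
    (UniformFun.toFun j x) (UniformFun.toFun g x)
  rw [dist_comm (UniformFun.toFun g x)] at h2
  linarith
end

section
/- Let (a_n) be a bounded sequence of real numbers with a := sup_n |a_n|, and let g : ℝ → ℝ be continuous with g(t) → +∞ as t → +∞ and g(t) → −∞ as t → −∞. Define f_n : ℝ × ℝ → ℝ by f_n(t,x) = a_n · e^{−|g(t) − x|}. Then the family {f_n : n ∈ ℕ} satisfies condition (EP): for every ε > 0 and every compact set D ⊆ ℝ there exists R > 0 such that for all n,m ∈ ℕ and all t with |t| > R, ∫_D |a_n e^{−|g(t) − x|} − a_m e^{−|g(t) − x|}| dx < ε. -/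
open Set Filter Topology MeasureTheory

/-! The integrand is `|aₙ - aₘ| e^{-|g t - x|}` with `|aₙ - aₘ| ≤ 2C`, so it suffices that
`∫_D e^{-|y - x|} dx → 0` as `|y| → ∞`: this is dominated convergence on the finite measure space
`D`, with dominating function `1`. Since `g` tends to `±∞` at `±∞`, it tends to infinity along the
cocompact filter, so `y = g t` does this as `|t| → ∞`. -/

theorem tendsto_integral_exp_neg_dist_cocompact {α : Type*} [MetricSpace α] [ProperSpace α]
    [MeasurableSpace α] [BorelSpace α] (μ : Measure α) [IsFiniteMeasure μ] :
    Tendsto (fun y => ∫ x, Real.exp (-dist y x) ∂μ) (cocompact α) (𝓝 0) := by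
  have hlim : ∀ x, Tendsto (fun y => Real.exp (-dist y x)) (cocompact α) (𝓝 0) := fun x =>
    Real.tendsto_exp_neg_atTop_nhds_zero.comp (tendsto_dist_right_cocompact_atTop x)
  rcases isEmpty_or_nonempty α with _ | ⟨⟨x₀⟩⟩
  · simp [cocompact_eq_bot]
  -- this form of the cocompact filter is visibly countably generated
  rw [← comap_dist_left_atTop_eq_cocompact x₀] at hlim ⊢
  simpa using tendsto_integral_filter_of_dominated_convergence (fun _ => (1 : ℝ))
    (Eventually.of_forall fun y =>
      (by fun_prop : Continuous fun x => Real.exp (-dist y x)).aestronglyMeasurable)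
    (Eventually.of_forall fun y => ae_of_all _ fun x => by simp [abs_of_pos (Real.exp_pos _)])
    (integrable_const 1) (ae_of_all _ hlim)

theorem Filter.Tendsto.cocompact_of_atBot_atTop {g : ℝ → ℝ} (htop : Tendsto g atTop atTop)
    (hbot : Tendsto g atBot atBot) : Tendsto g (cocompact ℝ) (cocompact ℝ) := by
  rw [cocompact_eq_atBot_atTop]
  exact tendsto_sup.2 ⟨hbot.mono_right le_sup_left, htop.mono_right le_sup_right⟩

theorem exists_pos_forall_lt_abs_of_eventually_cocompact {p : ℝ → Prop}
    (h : ∀ᶠ t in cocompact ℝ, p t) : ∃ R > 0, ∀ t, R < |t| → p t := by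
  rw [cocompact_eq_atBot_atTop, ← comap_abs_atTop, eventually_comap, eventually_atTop] at h
  obtain ⟨R, hR⟩ := h
  exact ⟨max R 1, by positivity, fun t ht => hR |t| ((le_max_left R 1).trans ht.le) t rfl⟩

theorem diracLikeFamily_EP_general
    (a : ℕ → ℝ) (ha : ∃ C : ℝ, ∀ n : ℕ, |a n| ≤ C)
    (g : ℝ → ℝ)
    (htop : Tendsto g atTop atTop) (hbot : Tendsto g atBot atBot) :
    ∀ ε > (0 : ℝ), ∀ D : Set ℝ, IsCompact D → ∃ R > (0 : ℝ),
      ∀ n m : ℕ, ∀ t : ℝ, R < |t| →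
        ∫ x in D, |a n * Real.exp (-|g t - x|) - a m * Real.exp (-|g t - x|)| < ε := by
  obtain ⟨C, hC⟩ := ha
  intro ε hε D hD
  have : IsFiniteMeasure (volume.restrict D) := isFiniteMeasure_restrict.2 hD.measure_lt_top.ne
  have hsmall := (((tendsto_integral_exp_neg_dist_cocompact (volume.restrict D)).comp
    (htop.cocompact_of_atBot_atTop hbot)).const_mul (2 * C)).eventually
      (gt_mem_nhds (by rwa [mul_zero]))
  obtain ⟨R, hR, hRsmall⟩ := exists_pos_forall_lt_abs_of_eventually_cocompact hsmall
  refine ⟨R, hR, fun n m t ht => ?_⟩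
  calc ∫ x in D, |a n * Real.exp (-|g t - x|) - a m * Real.exp (-|g t - x|)|
      = |a n - a m| * ∫ x in D, Real.exp (-dist (g t) x) := by
        simp only [← sub_mul, abs_mul, Real.abs_exp, Real.dist_eq, integral_const_mul]
    _ ≤ 2 * C * ∫ x in D, Real.exp (-dist (g t) x) :=
        mul_le_mul_of_nonneg_right ((abs_sub _ _).trans (by linarith [hC n, hC m]))
          (integral_nonneg fun _ => (Real.exp_pos _).le)
    _ < ε := hRsmall t ht

/-- For a bounded sequence `(aₙ)` of reals and a continuous `g : ℝ → ℝ` with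
`g(t) → +∞` as `t → +∞` and `g(t) → −∞` as `t → −∞`, the family
`fₙ(t, x) = aₙ · exp (−|g t − x|)` satisfies condition (EP). -/
theorem diracLikeFamily_EP
    (a : ℕ → ℝ) (ha : ∃ C : ℝ, ∀ n : ℕ, |a n| ≤ C)
    (g : ℝ → ℝ) (hg : Continuous g)
    (htop : Tendsto g atTop atTop) (hbot : Tendsto g atBot atBot) :
    ∀ ε > (0 : ℝ), ∀ D : Set ℝ, IsCompact D → ∃ R > (0 : ℝ),
      ∀ n m : ℕ, ∀ t : ℝ, R < |t| →
        ∫ x in D, |a n * Real.exp (-|g t - x|) - a m * Real.exp (-|g t - x|)| < ε :=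
  diracLikeFamily_EP_general a ha g htop hbot
end
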